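/- Let H ∈ ℂ^{n×n} and let Π be a real symmetric 2×2 matrix with entries π₁₁, π₁₂, π₂₂. Then the Hermitian matrix π₁₁·Iₙ + π₁₂·(H + H*) + π₂₂·H*H is positive semidefinite if and only if the frequency-wise SRG of H is contained in S(Π). (The matrix π₁₁·Iₙ + π₁₂·(H + H*) + π₂₂·H*H equals [Iₙ; H]* (Π ⊗ Iₙ) [Iₙ; H] for the stacked 2n×n matrix [Iₙ; H].) -/

import Mathlib

open Matrix
open scoped ComplexOrder Classical

/-- The region `S(Π)` in the complex plane associated with a real symmetric 2×2 matrix `Π`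
with entries `π₁₁, π₁₂, π₂₂`:  `S(Π) = {z ∈ ℂ : π₁₁ + 2·π₁₂·Re z + π₂₂·|z|² ≥ 0}`. -/
def SRegion (p11 p12 p22 : ℝ) : Set ℂ :=
  {z : ℂ | 0 ≤ p11 + 2 * p12 * z.re + p22 * ‖z‖ ^ 2}

/-- SRG point `z₊(u, y) = (‖y‖/‖u‖)·exp(+i·arccos(Re⟪u,y⟫/(‖u‖‖y‖)))` for complex
vectors (and `0` for `y = 0`). -/
noncomputable def srgPlusC {n : ℕ} (u y : EuclideanSpace ℂ (Fin n)) : ℂ :=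
  if y = 0 then 0 else
    ((‖y‖ / ‖u‖ : ℝ) : ℂ) *
      Complex.exp (Complex.I *
        (Real.arccos ((inner ℂ u y : ℂ).re / (‖u‖ * ‖y‖)) : ℝ))

/-- SRG point `z₋(u, y) = (‖y‖/‖u‖)·exp(−i·arccos(Re⟪u,y⟫/(‖u‖‖y‖)))` for complex
vectors (and `0` for `y = 0`). -/
noncomputable def srgMinusC {n : ℕ} (u y : EuclideanSpace ℂ (Fin n)) : ℂ :=
  if y = 0 then 0 else
    ((‖y‖ / ‖u‖ : ℝ) : ℂ) *
      Complex.exp (-Complex.I *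
        (Real.arccos ((inner ℂ u y : ℂ).re / (‖u‖ * ‖y‖)) : ℝ))

/-- Matrix-vector multiplication, viewed on `EuclideanSpace ℂ (Fin n)`. -/
noncomputable def mulVecE {n : ℕ} (H : Matrix (Fin n) (Fin n) ℂ)
    (u : EuclideanSpace ℂ (Fin n)) : EuclideanSpace ℂ (Fin n) :=
  (WithLp.equiv 2 _).symm (H *ᵥ (WithLp.equiv 2 _) u)

/-- The frequency-wise SRG of a matrix `H ∈ ℂ^{n×n}`:
`SRG(H) = ⋃ {z_±(u, Hu)}` over all nonzero `u ∈ ℂⁿ`. -/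
noncomputable def fwSRG {n : ℕ} (H : Matrix (Fin n) (Fin n) ℂ) : Set ℂ :=
  {z : ℂ | ∃ u : EuclideanSpace ℂ (Fin n), u ≠ 0 ∧
    (z = srgPlusC u (mulVecE H u) ∨ z = srgMinusC u (mulVecE H u))}

/-!
For `u ≠ 0` both SRG points `z` of `(u, Hu)` satisfy `Re z · ‖u‖² = Re ⟪u, Hu⟫` and
`|z| · ‖u‖ = ‖Hu‖` (the `arccos` in their argument just undoes the Cauchy–Schwarz normalisation),
so `‖u‖²` times the defining expression of `S(Π)` at `z` is the quadratic form `⟪u, M u⟫` of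
`M = π₁₁ I + π₁₂ (H + H*) + π₂₂ H*H`. Since `M` is Hermitian for real `Π`, `SRG(H) ⊆ S(Π)` is
then exactly positive semidefiniteness of `M`.
-/

open ComplexConjugate

namespace LinearMap

variable {𝕜 E : Type*} [RCLike 𝕜] [NormedAddCommGroup E] [InnerProductSpace 𝕜 E]
  [FiniteDimensional 𝕜 E]

open RCLike

/-- `[1; T]† (Π ⊗ 1) [1; T]` for `Π = !![p11, p12; p12, p22]`. -/
noncomputable def quadraticOp (p11 p12 p22 : ℝ) (T : E →ₗ[𝕜] E) : E →ₗ[𝕜] E :=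
  (p11 : 𝕜) • 1 + (p12 : 𝕜) • (T + T.adjoint) + (p22 : 𝕜) • (T.adjoint * T)

variable (p11 p12 p22 : ℝ) (T : E →ₗ[𝕜] E)

theorem isSymmetric_quadraticOp : (quadraticOp p11 p12 p22 T).IsSymmetric := by
  intro x y
  simp only [quadraticOp, add_apply, smul_apply, Module.End.one_apply, Module.End.mul_apply,
    inner_add_left, inner_add_right, inner_smul_left, inner_smul_right, adjoint_inner_left,
    adjoint_inner_right, conj_ofReal]
  ring

theorem re_inner_quadraticOp_apply_self (u : E) :
    re (inner 𝕜 (quadraticOp p11 p12 p22 T u) u) =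
      p11 * ‖u‖ ^ 2 + 2 * p12 * re (inner 𝕜 u (T u)) + p22 * ‖T u‖ ^ 2 := by
  simp only [quadraticOp, add_apply, smul_apply, Module.End.one_apply, Module.End.mul_apply,
    inner_add_left, inner_smul_left, adjoint_inner_left, conj_ofReal, map_add, re_ofReal_mul,
    inner_self_eq_norm_sq_to_K, ← ofReal_pow, ofReal_re, inner_re_symm]
  ring

theorem isPositive_quadraticOp_iff :
    (quadraticOp p11 p12 p22 T).IsPositive ↔
      ∀ u, 0 ≤ p11 * ‖u‖ ^ 2 + 2 * p12 * re (inner 𝕜 u (T u)) + p22 * ‖T u‖ ^ 2 := by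
  simp only [IsPositive, isSymmetric_quadraticOp, re_inner_quadraticOp_apply_self, true_and]

end LinearMap

theorem Matrix.toEuclideanLin_eq_quadraticOp {n 𝕜 : Type*} [RCLike 𝕜] [Fintype n]
    [DecidableEq n] (H : Matrix n n 𝕜) (p11 p12 p22 : ℝ) :
    toEuclideanLin (p11 • (1 : Matrix n n 𝕜) + p12 • (H + Hᴴ) + p22 • (Hᴴ * H)) =
      (toEuclideanLin H).quadraticOp p11 p12 p22 := by
  simp only [RCLike.real_smul_eq_coe_smul (K := 𝕜), LinearMap.quadraticOp, map_add, map_smul,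
    toLpLin_one, toLpLin_mul_same, toEuclideanLin_conjTranspose_eq_adjoint, Module.End.one_eq_id,
    Module.End.mul_eq_comp]

section SRGPoints

variable {n : ℕ} (u y : EuclideanSpace ℂ (Fin n))

theorem srgMinusC_eq_conj : srgMinusC u y = conj (srgPlusC u y) := by
  unfold srgMinusC srgPlusC
  split_ifs
  · simp
  · rw [map_mul, Complex.conj_ofReal, ← Complex.exp_conj, map_mul, Complex.conj_I,
      Complex.conj_ofReal, neg_mul]

theorem norm_srgPlusC : ‖srgPlusC u y‖ = ‖y‖ / ‖u‖ := by
  unfold srgPlusC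
  split_ifs with hy
  · simp [hy]
  · rw [norm_mul, mul_comm Complex.I, Complex.norm_exp_ofReal_mul_I, mul_one, Complex.norm_real,
      Real.norm_of_nonneg (by positivity)]

theorem re_srgPlusC : (srgPlusC u y).re = (inner ℂ u y).re / ‖u‖ ^ 2 := by
  unfold srgPlusC
  split_ifs with hy
  · simp [hy]
  have hcs : |(inner ℂ u y).re / (‖u‖ * ‖y‖)| ≤ 1 := by
    rw [abs_div, abs_mul, abs_norm, abs_norm]
    exact div_le_one_of_le₀ ((Complex.abs_re_le_norm _).trans (norm_inner_le_norm u y))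
      (by positivity)
  rw [Complex.re_ofReal_mul, mul_comm Complex.I, Complex.exp_ofReal_mul_I_re,
    Real.cos_arccos (abs_le.1 hcs).1 (abs_le.1 hcs).2]
  field_simp

end SRGPoints

theorem conj_mem_SRegion_iff {p11 p12 p22 : ℝ} {z : ℂ} :
    conj z ∈ SRegion p11 p12 p22 ↔ z ∈ SRegion p11 p12 p22 := by
  simp [SRegion]

theorem srgPlusC_mem_SRegion_iff {n : ℕ} {u : EuclideanSpace ℂ (Fin n)} (hu : u ≠ 0)
    (y : EuclideanSpace ℂ (Fin n)) (p11 p12 p22 : ℝ) :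
    srgPlusC u y ∈ SRegion p11 p12 p22 ↔
      0 ≤ p11 * ‖u‖ ^ 2 + 2 * p12 * (inner ℂ u y).re + p22 * ‖y‖ ^ 2 := by
  have hu2 : 0 < ‖u‖ ^ 2 := by positivity
  have hscale : p11 + 2 * p12 * (srgPlusC u y).re + p22 * ‖srgPlusC u y‖ ^ 2 =
      (p11 * ‖u‖ ^ 2 + 2 * p12 * (inner ℂ u y).re + p22 * ‖y‖ ^ 2) / ‖u‖ ^ 2 := by
    rw [re_srgPlusC, norm_srgPlusC]
    field_simp
  rw [SRegion, Set.mem_ofPred_eq, hscale, le_div_iff₀ hu2, zero_mul]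

theorem fwSRG_subset_SRegion_iff {n : ℕ} (H : Matrix (Fin n) (Fin n) ℂ) (p11 p12 p22 : ℝ) :
    fwSRG H ⊆ SRegion p11 p12 p22 ↔ ∀ u, u ≠ 0 →
      0 ≤ p11 * ‖u‖ ^ 2 + 2 * p12 * (inner ℂ u (mulVecE H u)).re + p22 * ‖mulVecE H u‖ ^ 2 := by
  refine ⟨fun h u hu ↦ (srgPlusC_mem_SRegion_iff hu _ _ _ _).1 (h ⟨u, hu, .inl rfl⟩), ?_⟩
  rintro h z ⟨u, hu, rfl | rfl⟩
  · exact (srgPlusC_mem_SRegion_iff hu _ _ _ _).2 (h u hu)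
  · rw [srgMinusC_eq_conj, conj_mem_SRegion_iff]
    exact (srgPlusC_mem_SRegion_iff hu _ _ _ _).2 (h u hu)

/-- For `H ∈ ℂ^{n×n}` and a real symmetric 2×2 matrix `Π` with entries `π₁₁, π₁₂, π₂₂`,
`π₁₁·Iₙ + π₁₂·(H + H*) + π₂₂·H*H = [Iₙ; H]*(Π ⊗ Iₙ)[Iₙ; H]` is positive semidefinite iff
the frequency-wise SRG of `H` is contained in `S(Π)`. -/
theorem fw_srg_subset_iff_psd (n : ℕ) (H : Matrix (Fin n) (Fin n) ℂ)
    (p11 p12 p22 : ℝ) :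
    (p11 • (1 : Matrix (Fin n) (Fin n) ℂ) + p12 • (H + Hᴴ) + p22 • (Hᴴ * H)).PosSemidef ↔
      fwSRG H ⊆ SRegion p11 p12 p22 := by
  rw [← isPositive_toEuclideanLin_iff, toEuclideanLin_eq_quadraticOp,
    LinearMap.isPositive_quadraticOp_iff, fwSRG_subset_SRegion_iff]
  refine ⟨fun h u _ ↦ h u, fun h u ↦ ?_⟩
  by_cases hu : u = 0
  · simp [hu]
  · exact h u hu
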